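/- arXiv:2409.10548 — 2 statements merged into one kernel-verified Lean document; each statement's English description precedes it below -/
import Mathlib

section
/- Let p be a positive integer, b = sin(π/(p+1))/(1 + cos(π/(p+1))), γ₁ = (1/2)(1 + i·b) and γ₂ = conj(γ₁). Then γ₁^(p+1) + γ₂^(p+1) = 0. -/
open Real Complex

theorem stmt_1 (p : ℕ) (hp : 1 ≤ p)
    (b : ℝ) (hb : b = Real.sin (π / (p + 1)) / (1 + Real.cos (π / (p + 1))))
    (γ₁ γ₂ : ℂ) (h1 : γ₁ = (1/2 : ℂ) * (1 + Complex.I * (b : ℂ)))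
    (h2 : γ₂ = starRingEnd ℂ γ₁) :
    γ₁ ^ (p + 1) + γ₂ ^ (p + 1) = 0 := by
  have hπ : (0:ℝ) < π := Real.pi_pos
  have hp1 : (1:ℝ) ≤ (p:ℝ) := by exact_mod_cast hp
  set θ : ℝ := π / (2 * ((p:ℝ) + 1)) with hθ
  have hθpos : 0 < θ := by positivity
  have hθlt : θ < π / 2 := by
    rw [hθ, div_lt_div_iff₀ (by positivity) (by positivity)]
    nlinarith
  have hcos : 0 < Real.cos θ := Real.cos_pos_of_mem_Ioo ⟨by linarith, hθlt⟩
  have h2θ : π / ((p:ℝ)+1) = 2*θ := by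
    rw [hθ]; field_simp
  have hb' : b = Real.sin θ / Real.cos θ := by
    rw [hb]
    push_cast
    rw [h2θ, Real.sin_two_mul, Real.cos_two_mul,
      show (1 + (2*Real.cos θ^2 - 1)) = 2*Real.cos θ^2 by ring]
    field_simp
  have hγ : γ₁ = ((1/(2*Real.cos θ) : ℝ) : ℂ) * Complex.exp (θ * Complex.I) := by
    have hcne : (Real.cos θ : ℂ) ≠ 0 := Complex.ofReal_ne_zero.mpr hcos.ne'
    rw [h1, Complex.exp_mul_I, hb', ← Complex.ofReal_cos, ← Complex.ofReal_sin,
      Complex.ofReal_div, Complex.ofReal_div, Complex.ofReal_mul, Complex.ofReal_one,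
      Complex.ofReal_ofNat]
    set c : ℂ := ((Real.cos θ : ℝ) : ℂ) with hc
    set sc : ℂ := ((Real.sin θ : ℝ) : ℂ) with hsc
    field_simp
  have key : ((p:ℝ)+1) * θ = π/2 := by
    rw [hθ]; field_simp
  have hpow : γ₁ ^ (p+1) = ((1/(2*Real.cos θ):ℝ):ℂ)^(p+1) * Complex.I := by
    rw [hγ, mul_pow, ← Complex.exp_nat_mul]
    congr 1
    have : ((p:ℂ)+1) * (θ * Complex.I) = (((((p:ℝ)+1) * θ):ℝ):ℂ) * Complex.I := by
      push_cast; ring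
    push_cast
    rw [this, key]
    push_cast
    rw [Complex.exp_mul_I]
    simp
  have hpow2 : γ₂ ^ (p+1) = ((1/(2*Real.cos θ):ℝ):ℂ)^(p+1) * (-Complex.I) := by
    rw [h2, ← map_pow, hpow, map_mul, map_pow, Complex.conj_ofReal, Complex.conj_I]
  rw [hpow, hpow2]
  ring
end

section
/- Let δ > 0, d = 1/δ − 1, and let W denote the Lambert W function (the inverse of w ↦ w·e^w on [0,∞)). Then y(t) = 1/(W(d·e^(d−t)) + 1) satisfies y'(t) = y(t)² − y(t)³ for all t ∈ ℝ, with y(0) = δ. -/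
/-!
Write `w t = W (d * exp (d - t))`. The inner function is minus its own derivative, so the
differential equation of `W` gives `w' = -w / (1 + w)`. Hence `y = 1 / (1 + w)` has
`y' = w / (1 + w) ^ 3 = y ^ 2 (1 - y)`, and `y 0 = 1 / (1 + d) = δ` because `W (d * exp d) = d`.
-/

open Real

lemma hasDerivAt_const_mul_exp_const_sub (d t : ℝ) :
    HasDerivAt (fun s => d * exp (d - s)) (-(d * exp (d - t))) t := by
  refine ((((hasDerivAt_id t).const_sub d).exp).const_mul d).congr_deriv ?_
  simp

lemma HasDerivAt.comp_of_deriv_eq_neg_self {W g : ℝ → ℝ} {t : ℝ}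
    (hg : HasDerivAt g (-g t) t) (hW : HasDerivAt W (W (g t) / (g t * (1 + W (g t)))) (g t))
    (hgt : g t ≠ 0) :
    HasDerivAt (fun s => W (g s)) (-(W (g t) / (1 + W (g t)))) t := by
  refine (hW.comp t hg).congr_deriv ?_
  field_simp

lemma HasDerivAt.one_div_add_one {w : ℝ → ℝ} {t : ℝ}
    (hw : HasDerivAt w (-(w t / (1 + w t))) t) (hwt : 1 + w t ≠ 0) :
    HasDerivAt (fun s => 1 / (w s + 1)) ((1 / (w t + 1)) ^ 2 - (1 / (w t + 1)) ^ 3) t := by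
  have hwt' : w t + 1 ≠ 0 := by rwa [add_comm]
  simp only [one_div]
  refine ((hw.add_const 1).inv hwt').congr_deriv ?_
  field_simp
  ring

theorem stmt_10 (δ : ℝ) (hδ : 0 < δ) (hδ1 : δ < 1)
    (d : ℝ) (hd : d = 1 / δ - 1)
    (W : ℝ → ℝ)
    (hW_inv : ∀ w : ℝ, 0 ≤ w → W (w * Real.exp w) = w)
    (hW_pos : ∀ z : ℝ, 0 < z → 0 < W z)
    (hW_deriv : ∀ z : ℝ, 0 < z → HasDerivAt W (W z / (z * (1 + W z))) z)
    (y : ℝ → ℝ) (hy : ∀ t, y t = 1 / (W (d * Real.exp (d - t)) + 1)) :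
    y 0 = δ ∧ ∀ t : ℝ, HasDerivAt y ((y t) ^ 2 - (y t) ^ 3) t := by
  have hd0 : 0 < d := by
    rw [hd, sub_pos]
    exact one_lt_one_div hδ hδ1
  have hy_eq : y = fun t => 1 / (W (d * exp (d - t)) + 1) := funext hy
  refine ⟨?_, fun t => ?_⟩
  · rw [hy, sub_zero, hW_inv d hd0.le, hd]
    simp
  · have hz : 0 < d * exp (d - t) := by positivity
    have hw := (hasDerivAt_const_mul_exp_const_sub d t).comp_of_deriv_eq_neg_self
      (hW_deriv _ hz) hz.ne'
    rw [hy_eq]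
    exact HasDerivAt.one_div_add_one (w := fun s => W (d * exp (d - s))) hw
      (by linarith [hW_pos _ hz])
end
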